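/- No finite Kripke structure satisfies the Cycle-CTL* formula A G ¬E^cycle ⊤. That is, if K = (AP, W, R, L, w_I) is a Kripke structure with W finite, then K, w_I ⊭ A G ¬E^cycle ⊤; equivalently, every finite Kripke structure has a world reachable along some path from w_I at which a cycle starts. -/

import Mathlib

namespace CycleCTL

universe u v

/-- A Kripke structure over a set `AP` of atomic propositions. -/
structure Kripke (AP : Type) : Type (u + 1) where
  World : Type u
  init : World
  R : World → World → Prop
  label : World → Set AP
  serial : ∀ w, ∃ v, R w v

variable {AP : Type}

/-- An (infinite) path of a Kripke structure. -/
def IsPath (K : Kripke.{u} AP) (π : ℕ → K.World) : Prop :=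
  ∀ i, K.R (π i) (π (i + 1))

/-- A cycle: a path visiting its first world infinitely often. -/
def IsCycle (K : Kripke.{u} AP) (π : ℕ → K.World) : Prop :=
  IsPath K π ∧ ∀ i, ∃ j, i < j ∧ π j = π 0

mutual
  /-- State formulas of Cycle-CTL*. -/
  inductive StateForm (AP : Type) : Type where
    | atom : AP → StateForm AP
    | not  : StateForm AP → StateForm AP
    | and  : StateForm AP → StateForm AP → StateForm AP
    | or   : StateForm AP → StateForm AP → StateForm AP
    | E    : PathForm AP → StateForm AP
    | A    : PathForm AP → StateForm AP
    | Ec   : PathForm AP → StateForm AP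
    | Ac   : PathForm AP → StateForm AP
  /-- Path formulas of Cycle-CTL*. -/
  inductive PathForm (AP : Type) : Type where
    | state : StateForm AP → PathForm AP
    | not   : PathForm AP → PathForm AP
    | and   : PathForm AP → PathForm AP → PathForm AP
    | or    : PathForm AP → PathForm AP → PathForm AP
    | next  : PathForm AP → PathForm AP
    | untl  : PathForm AP → PathForm AP → PathForm AP
end

mutual
  /-- Satisfaction of a state formula at a world. -/
  def SatS (K : Kripke.{u} AP) : K.World → StateForm AP → Prop
    | w, .atom p => p ∈ K.label w
    | w, .not φ => ¬ SatS K w φ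
    | w, .and φ₁ φ₂ => SatS K w φ₁ ∧ SatS K w φ₂
    | w, .or φ₁ φ₂ => SatS K w φ₁ ∨ SatS K w φ₂
    | w, .E ψ => ∃ π, IsPath K π ∧ π 0 = w ∧ SatP K π 0 ψ
    | w, .A ψ => ∀ π, IsPath K π → π 0 = w → SatP K π 0 ψ
    | w, .Ec ψ => ∃ π, IsCycle K π ∧ π 0 = w ∧ SatP K π 0 ψ
    | w, .Ac ψ => ∀ π, IsCycle K π → π 0 = w → SatP K π 0 ψ
  /-- Satisfaction of a path formula on a path at a position. -/
  def SatP (K : Kripke.{u} AP) : (ℕ → K.World) → ℕ → PathForm AP → Prop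
    | π, i, .state φ => SatS K (π i) φ
    | π, i, .not ψ => ¬ SatP K π i ψ
    | π, i, .and ψ₁ ψ₂ => SatP K π i ψ₁ ∧ SatP K π i ψ₂
    | π, i, .or ψ₁ ψ₂ => SatP K π i ψ₁ ∨ SatP K π i ψ₂
    | π, i, .next ψ => SatP K π (i + 1) ψ
    | π, i, .untl ψ₁ ψ₂ => ∃ k, SatP K π (i + k) ψ₂ ∧ ∀ j < k, SatP K π (i + j) ψ₁
end

/-- `K ⊨ φ` : satisfaction at the initial world. -/
def Sat (K : Kripke.{u} AP) (φ : StateForm AP) : Prop := SatS K K.init φ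

/-- `⊤` as a path formula, abbreviating `p ∨ ¬p`. -/
def topP (p : AP) : PathForm AP := .or (.state (.atom p)) (.not (.state (.atom p)))

/-- `F ψ` abbreviates `⊤ U ψ`. -/
def FP (p : AP) (ψ : PathForm AP) : PathForm AP := .untl (topP p) ψ

/-- `G ψ` abbreviates `¬(⊤ U ¬ψ)`. -/
def GP (p : AP) (ψ : PathForm AP) : PathForm AP := .not (FP p (.not ψ))

/-! Along any path from the initial world, finiteness forces a repetition `π i = π j` with
`i < j`; running around the segment `π i, …, π (j - 1)` forever is a cycle starting at `π i`,
so `E^cycle ⊤` holds at a world on the path, against `G ¬E^cycle ⊤`. -/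

theorem exists_isPath (K : Kripke.{u} AP) (w : K.World) : ∃ π, IsPath K π ∧ π 0 = w := by
  choose next hnext using K.serial
  exact ⟨fun n => next^[n] w, fun n => by simpa [Function.iterate_succ_apply'] using hnext _, rfl⟩

theorem IsPath.isCycle_mod {K : Kripke.{u} AP} {π : ℕ → K.World} (hπ : IsPath K π) {i d : ℕ}
    (hd : 0 < d) (hloop : π (i + d) = π i) : IsCycle K (fun n => π (i + n % d)) := by
  refine ⟨fun n => ?_, fun m => ⟨(m + 1) * d, by nlinarith, by simp⟩⟩
  have hstep := hπ (i + n % d)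
  show K.R (π (i + n % d)) (π (i + (n + 1) % d))
  rw [← Nat.mod_add_mod]
  rcases (Nat.add_one_le_of_lt (Nat.mod_lt n hd)).eq_or_lt with hwrap | hnowrap
  · rw [hwrap, Nat.mod_self, add_zero, ← hloop]
    rwa [add_assoc, hwrap] at hstep
  · rwa [Nat.mod_eq_of_lt hnowrap]

theorem exists_isCycle_of_isPath {K : Kripke.{u} AP} [Finite K.World] {π : ℕ → K.World}
    (hπ : IsPath K π) : ∃ i σ, IsCycle K σ ∧ σ 0 = π i := by
  obtain ⟨i, j, hij, hloop⟩ :=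
    Set.finite_univ.exists_lt_map_eq_of_forall_mem (f := π) fun n => Set.mem_univ (π n)
  have hloop' : π (i + (j - i)) = π i := by rw [Nat.add_sub_cancel' hij.le, hloop]
  exact ⟨i, _, hπ.isCycle_mod (Nat.sub_pos_of_lt hij) hloop', by simp⟩

theorem satP_topP (K : Kripke.{u} AP) (p : AP) (π : ℕ → K.World) (i : ℕ) :
    SatP K π i (topP p) := by
  simp only [topP, SatP]
  exact em _

theorem satS_Ec_topP_iff {K : Kripke.{u} AP} {p : AP} {w : K.World} :
    SatS K w (.Ec (topP p)) ↔ ∃ π, IsCycle K π ∧ π 0 = w := by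
  simp only [SatS, satP_topP, and_true]

theorem satP_GP_iff {K : Kripke.{u} AP} {p : AP} {ψ : PathForm AP} {π : ℕ → K.World} {i : ℕ} :
    SatP K π i (GP p ψ) ↔ ∀ k, SatP K π (i + k) ψ := by
  simp [GP, FP, SatP, satP_topP]

/-- No finite Kripke structure satisfies `A G ¬ E^cycle ⊤`. -/
theorem stmt0 {AP : Type} (p : AP) (K : Kripke.{u} AP) (hfin : Finite K.World) :
    ¬ Sat K (.A (GP p (.state (.not (.Ec (topP p)))))) := by
  intro hsat
  obtain ⟨π, hπ, hπ0⟩ := exists_isPath K K.init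
  obtain ⟨i, σ, hσ, hσ0⟩ := exists_isCycle_of_isPath hπ
  have hnoCycle := satP_GP_iff.mp (hsat π hπ hπ0) i
  simp only [SatP, SatS, zero_add] at hnoCycle
  exact hnoCycle (satS_Ec_topP_iff.mpr ⟨σ, hσ, hσ0⟩)

end CycleCTL
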